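/- Let E be a simple BCK-algebra in which no element has an upper bound on its relative heights (i.e., for every a ≠ 0 and every k there is x ∈ E with a\x^k ≠ 0), and let (e_n) be a strictly descending sequence in E converging to 0 (for every d > 0 there is i with e_i ≤ d). Then no nonzero constant sequence belongs to the ideal of E^ω generated by the sequence ē = (e_n). -/
import Mathlib


structure BCK (A : Type*) where
  zero : A
  sub : A → A → A
  ax1 : ∀ x y z, sub (sub (sub x y) (sub x z)) (sub z y) = zero
  ax2 : ∀ x, sub x zero = x
  ax3 : ∀ x, sub zero x = zero
  ax4 : ∀ x y, sub x y = zero → sub y x = zero → x = y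

def BCK.le {A : Type*} (B : BCK A) (a b : A) : Prop := B.sub a b = B.zero

def BCK.IsIdeal {A : Type*} (B : BCK A) (I : Set A) : Prop :=
  B.zero ∈ I ∧ ∀ a b : A, b ∈ I → B.sub a b ∈ I → a ∈ I

def BCK.iterSub {A : Type*} (B : BCK A) (a b : A) : ℕ → A
  | 0 => a
  | n + 1 => B.sub (B.iterSub a b n) b

namespace BCK

variable {A : Type*} (B : BCK A)

lemma sub_self (x : A) : B.sub x x = B.zero := by
  have h := B.ax1 x B.zero B.zero
  simpa only [B.ax2, B.ax3] using h

lemma le_trans {x y z : A} (h1 : B.le x y) (h2 : B.le y z) : B.le x z := by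
  have h := B.ax1 x z y
  unfold BCK.le at *
  rwa [h1, B.ax2, h2, B.ax2] at h

lemma sub_le_sub_left {a b : A} (c : A) (h : B.le a b) : B.le (B.sub a c) (B.sub b c) := by
  have h1 := B.ax1 a c b
  unfold BCK.le at *
  rwa [h, B.ax2] at h1

lemma sub_le_sub_right (x : A) {y z : A} (h : B.le y z) : B.le (B.sub x z) (B.sub x y) := by
  have h1 := B.ax1 x z y
  unfold BCK.le at *
  rwa [h, B.ax2] at h1

lemma sub_le (a b : A) : B.le (B.sub a b) a := by
  have h := B.sub_le_sub_right a (y := B.zero) (z := b) (B.ax3 b)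
  rwa [B.ax2] at h

lemma iterSub_le_iterSub {a b : A} (h : B.le a b) (c : A) (n : ℕ) :
    B.le (B.iterSub a c n) (B.iterSub b c n) := by
  induction n with
  | zero => exact h
  | succ n ih => exact B.sub_le_sub_left c ih

lemma iterSub_antitone (x : A) {y z : A} (h : B.le y z) (n : ℕ) :
    B.le (B.iterSub x z n) (B.iterSub x y n) := by
  induction n with
  | zero => exact B.sub_self x
  | succ n ih =>
    exact B.le_trans (B.sub_le_sub_left z ih) (B.sub_le_sub_right _ h)

end BCK

theorem bck_no_constant_in_generated_ideal {A : Type*} (B : BCK A)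
    (hsimple : ∀ I : Set A, B.IsIdeal I → I = {B.zero} ∨ I = Set.univ)
    (hunbounded : ∀ a : A, a ≠ B.zero → ∀ k : ℕ, ∃ x : A, B.iterSub a x k ≠ B.zero)
    (e : ℕ → A)
    (hdesc : ∀ n : ℕ, B.le (e (n + 1)) (e n) ∧ e (n + 1) ≠ e n)
    (hconv : ∀ d : A, d ≠ B.zero → ∃ i : ℕ, B.le (e i) d) :
    ∀ a : A, a ≠ B.zero → ¬ ∃ n : ℕ, ∀ i : ℕ, B.iterSub a (e i) n = B.zero := by
  intro a ha h
  classical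
  -- e is antitone
  have emono : ∀ i j : ℕ, i ≤ j → B.le (e j) (e i) := by
    intro i j hij
    induction j with
    | zero => obtain rfl : i = 0 := Nat.le_zero.mp hij; exact B.sub_self _
    | succ j ih =>
      rcases Nat.lt_or_ge i (j+1) with hlt | hge
      · exact B.le_trans (hdesc j).1 (ih (Nat.lt_succ_iff.mp hlt))
      · have : i = j + 1 := le_antisymm hij hge
        subst this; exact B.sub_self _
  -- take minimal n
  have hn := Nat.find_spec h
  set n := Nat.find h with hndef
  have hn0 : n ≠ 0 := by
    intro h0
    have := hn 0
    rw [h0] at this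
    exact ha this
  obtain ⟨m, hm⟩ := Nat.exists_eq_succ_of_ne_zero hn0
  have hmin : ¬ ∀ i, B.iterSub a (e i) m = B.zero :=
    Nat.find_min h (by omega)
  push_neg at hmin
  obtain ⟨i0, hi0⟩ := hmin
  set b := B.iterSub a (e i0) m with hbdef
  -- b is a lower bound of all e j
  have hble : ∀ j, B.le b (e j) := by
    intro j
    rcases Nat.le_total i0 j with hij | hij
    · -- b ≤ a\e_j^m ≤ e_j
      have h1 : B.le b (B.iterSub a (e j) m) :=
        B.iterSub_antitone a (emono i0 j hij) m
      have h2 : B.le (B.iterSub a (e j) m) (e j) := by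
        have := hn j
        rw [hm] at this
        exact this
      exact B.le_trans h1 h2
    · -- b ≤ e_{i0} ≤ e_j
      have h2 : B.le (B.iterSub a (e i0) m) (e i0) := by
        have := hn i0
        rw [hm] at this
        exact this
      exact B.le_trans h2 (emono j i0 hij)
  obtain ⟨i, hi⟩ := hconv b hi0
  have hbi : b = e i := B.ax4 b (e i) (hble i) hi
  have hbi1 : e (i+1) = b :=
    B.ax4 (e (i+1)) b (by rw [hbi]; exact (hdesc i).1) (hble (i+1))
  exact (hdesc i).2 (by rw [hbi1, hbi])
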